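/- arXiv:1707.09904 — 8 statements merged into one kernel-verified Lean document; each statement's English description precedes it below -/
import Mathlib

section
/- Let d and d' be two metrics on the same finite set X such that L∞(d, d') ≤ ε. Then the minimax path distances satisfy L∞(μ_S(d), μ_S(d')) ≤ ε, where μ_S(d) and μ_S(d') denote the minimax path distances of (X, d) and (X, d') respectively. (Stability of the nearest subdominant ultrametric under ℓ∞ perturbations of the metric.) -/
/-- The maximum of `d` over consecutive pairs of the chain `x :: l`
(`0` if the chain is a single point). -/
def chainMax {X : Type*} (d : X → X → ℝ) : X → List X → ℝ
  | _, [] => 0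
  | x, y :: l => max (d x y) (chainMax d y l)

/-- The minimax path distance: the infimum, over all finite paths
`x = x₀, x₁, …, x_k = y` of points of `X`, of the maximum of `d` over
consecutive pairs of the path. -/
noncomputable def minimaxDist {X : Type*} (d : X → X → ℝ) (x y : X) : ℝ :=
  sInf {c : ℝ | ∃ l : List X,
    (x :: l).getLast (List.cons_ne_nil x l) = y ∧ c = chainMax d x l}

/-- `L∞(d₁, d₂) = max_{x, y ∈ X} |d₁(x,y) − d₂(x,y)|` for two functions on
pairs of points of a finite nonempty set `X`. -/
noncomputable def Linf {X : Type*} [Fintype X] [Nonempty X] (d₁ d₂ : X → X → ℝ) : ℝ :=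
  Finset.sup' Finset.univ Finset.univ_nonempty
    fun p : X × X => |d₁ p.1 p.2 - d₂ p.1 p.2|

/-- Stability of the nearest subdominant ultrametric: if `d` and `d'` are two
metrics on the same finite set `X` with `L∞(d, d') ≤ ε`, then their minimax
path distances satisfy `L∞(μ_S(d), μ_S(d')) ≤ ε`. -/
theorem minimax_stable (X : Type*) [Fintype X] [Nonempty X]
    (d d' : X → X → ℝ) (ε : ℝ)
    (hd_zero : ∀ x y : X, d x y = 0 ↔ x = y)
    (hd_symm : ∀ x y : X, d x y = d y x)
    (hd_tri : ∀ x y z : X, d x z ≤ d x y + d y z)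
    (hd'_zero : ∀ x y : X, d' x y = 0 ↔ x = y)
    (hd'_symm : ∀ x y : X, d' x y = d' y x)
    (hd'_tri : ∀ x y z : X, d' x z ≤ d' x y + d' y z)
    (hε : Linf d d' ≤ ε) :
    Linf (minimaxDist d) (minimaxDist d') ≤ ε := by
  have hε0 : 0 ≤ ε := le_trans (abs_nonneg _)
    (le_trans (Finset.le_sup' (fun p : X × X => |d p.1 p.2 - d' p.1 p.2|)
      (Finset.mem_univ (Classical.arbitrary X, Classical.arbitrary X))) hε)
  have hpt : ∀ a b : X, |d a b - d' a b| ≤ ε := fun a b =>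
    le_trans (Finset.le_sup' (fun p : X × X => |d p.1 p.2 - d' p.1 p.2|)
      (Finset.mem_univ (a, b))) hε
  -- chainMax comparison
  have hchain : ∀ (e e' : X → X → ℝ), (∀ a b, e a b ≤ e' a b + ε) →
      ∀ (x : X) (l : List X), chainMax e x l ≤ chainMax e' x l + ε := by
    intro e e' h x l
    induction l generalizing x with
    | nil => simpa [chainMax] using hε0
    | cons y l ih =>
      simp only [chainMax]
      exact max_le (le_trans (h x y) (add_le_add_left (le_max_left _ _) _))
        (le_trans (ih y) (add_le_add_left (le_max_right _ _) _))
  have he : ∀ a b : X, d a b ≤ d' a b + ε := fun a b => by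
    have := abs_le.1 (hpt a b); linarith [this.2]
  have he' : ∀ a b : X, d' a b ≤ d a b + ε := fun a b => by
    have := abs_le.1 (hpt a b); linarith [this.1]
  have hnonneg : ∀ (e : X → X → ℝ) (x : X) (l : List X), 0 ≤ chainMax e x l := by
    intro e x l
    induction l generalizing x with
    | nil => simp [chainMax]
    | cons y l ih => exact le_trans (ih y) (le_max_right _ _)
  -- the defining set
  have hset : ∀ (e : X → X → ℝ) (x y : X),
      ({c : ℝ | ∃ l : List X,
        (x :: l).getLast (List.cons_ne_nil x l) = y ∧ c = chainMax e x l}).Nonempty ∧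
      BddBelow {c : ℝ | ∃ l : List X,
        (x :: l).getLast (List.cons_ne_nil x l) = y ∧ c = chainMax e x l} := by
    intro e x y
    constructor
    · exact ⟨chainMax e x [y], ⟨[y], by simp, rfl⟩⟩
    · exact ⟨0, fun c hc => by obtain ⟨l, _, rfl⟩ := hc; exact hnonneg e x l⟩
  have key : ∀ (e e' : X → X → ℝ), (∀ a b, e a b ≤ e' a b + ε) →
      ∀ x y : X, minimaxDist e x y ≤ minimaxDist e' x y + ε := by
    intro e e' h x y
    rw [← sub_le_iff_le_add]
    refine le_csInf (hset e' x y).1 ?_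
    rintro c ⟨l, hl, rfl⟩
    rw [sub_le_iff_le_add]
    refine le_trans (csInf_le (hset e x y).2 ⟨l, hl, rfl⟩) (hchain e e' h x l)
  refine Finset.sup'_le _ _ ?_
  rintro ⟨x, y⟩ -
  rw [abs_sub_le_iff]
  constructor <;> [linarith [key d d' he x y]; linarith [key d' d he' x y]]
end

section
/- Let (X, d) be a finite metric space, let μ_S be its minimax path distance, and let U be any ultrametric on X. Then L∞(μ_S, d) ≤ 2 · L∞(U, d). That is, the nearest subdominant ultrametric is a 2-approximation to the ℓ∞-nearest ultrametric. -/
lemma chainMax_nonneg {X : Type*} (d : X → X → ℝ) (hd : ∀ a b, 0 ≤ d a b) :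
    ∀ (l : List X) (x : X), 0 ≤ chainMax d x l := by
  intro l
  induction l with
  | nil => intro x; simp [chainMax]
  | cons y l ih =>
    intro x
    exact le_max_of_le_left (hd x y)

lemma ultra_chain {X : Type*} (U : X → X → ℝ)
    (hzero : ∀ x y : X, U x y = 0 ↔ x = y)
    (hultra : ∀ x y z : X, U x z ≤ max (U x y) (U y z)) :
    ∀ (l : List X) (x : X),
      U x ((x :: l).getLast (List.cons_ne_nil x l)) ≤ chainMax U x l := by
  intro l
  induction l with
  | nil =>
    intro x
    simp [chainMax, (hzero x x).mpr rfl]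
  | cons y l ih =>
    intro x
    have h1 : (x :: y :: l).getLast (List.cons_ne_nil x (y :: l)) =
        (y :: l).getLast (List.cons_ne_nil y l) := by
      simp [List.getLast]
    rw [h1]
    calc U x ((y :: l).getLast (List.cons_ne_nil y l))
        ≤ max (U x y) (U y ((y :: l).getLast (List.cons_ne_nil y l))) := hultra _ _ _
      _ ≤ max (U x y) (chainMax U y l) := max_le_max le_rfl (ih y)
      _ = chainMax U x (y :: l) := rfl

lemma chainMax_le_chainMax {X : Type*} (U d : X → X → ℝ) (ε : ℝ) (hε : 0 ≤ ε)
    (h : ∀ a b, U a b ≤ d a b + ε) :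
    ∀ (l : List X) (x : X), chainMax U x l ≤ chainMax d x l + ε := by
  intro l
  induction l with
  | nil => intro x; simp [chainMax, hε]
  | cons y l ih =>
    intro x
    have h1 : chainMax U x (y :: l) = max (U x y) (chainMax U y l) := rfl
    have h2 : chainMax d x (y :: l) = max (d x y) (chainMax d y l) := rfl
    rw [h1, h2]
    apply max_le
    · exact (h x y).trans (by
        have : d x y ≤ max (d x y) (chainMax d y l) := le_max_left _ _
        linarith)
    · exact (ih y).trans (by
        have : chainMax d y l ≤ max (d x y) (chainMax d y l) := le_max_right _ _
        linarith)

/-- For any ultrametric `U` on a finite metric space `(X, dist)`, the minimax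
path distance `μ_S` of `(X, dist)` satisfies `L∞(μ_S, dist) ≤ 2 · L∞(U, dist)`:
the nearest subdominant ultrametric is a 2-approximation to the
`ℓ∞`-nearest ultrametric. -/
theorem minimax_two_approximation (X : Type*) [MetricSpace X] [Fintype X] [Nonempty X]
    (U : X → X → ℝ)
    (hzero : ∀ x y : X, U x y = 0 ↔ x = y)
    (hsymm : ∀ x y : X, U x y = U y x)
    (hultra : ∀ x y z : X, U x z ≤ max (U x y) (U y z)) :
    Linf (minimaxDist dist) (fun x y : X => dist x y)
      ≤ 2 * Linf U (fun x y : X => dist x y) := by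
  set ε := Linf U (fun x y : X => dist x y) with hεdef
  have habs : ∀ a b : X, |U a b - dist a b| ≤ ε := by
    intro a b
    exact Finset.le_sup' (f := fun p : X × X => |U p.1 p.2 - dist p.1 p.2|)
      (Finset.mem_univ (a, b))
  have hε : 0 ≤ ε := (abs_nonneg _).trans (habs Classical.ofNonempty Classical.ofNonempty)
  have hU1 : ∀ a b : X, U a b ≤ dist a b + ε := by
    intro a b
    have := (abs_le.mp (habs a b)).2
    linarith
  have hU2 : ∀ a b : X, dist a b ≤ U a b + ε := by
    intro a b
    have := (abs_le.mp (habs a b)).1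
    linarith
  apply Finset.sup'_le
  intro p _
  obtain ⟨x, y⟩ := p
  rw [abs_le]
  -- the set defining minimaxDist
  set S : Set ℝ := {c : ℝ | ∃ l : List X,
    (x :: l).getLast (List.cons_ne_nil x l) = y ∧ c = chainMax dist x l} with hS
  have hmem : dist x y ∈ S := ⟨[y], by simp [List.getLast], by
    simp [chainMax, max_eq_left dist_nonneg]⟩
  have hne : S.Nonempty := ⟨_, hmem⟩
  have hbdd : BddBelow S := by
    refine ⟨0, ?_⟩
    rintro c ⟨l, -, rfl⟩
    exact chainMax_nonneg dist (fun a b => dist_nonneg) l x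
  have hle : minimaxDist dist x y ≤ dist x y := csInf_le hbdd hmem
  constructor
  · -- dist x y - 2ε ≤ each element of S
    have : dist x y - 2 * ε ≤ minimaxDist dist x y := by
      apply le_csInf hne
      rintro c ⟨l, hlast, rfl⟩
      have h1 : U x y ≤ chainMax U x l := by
        have := ultra_chain U hzero hultra l x
        rwa [hlast] at this
      have h2 : chainMax U x l ≤ chainMax dist x l + ε :=
        chainMax_le_chainMax U dist ε hε hU1 l x
      have h3 := hU2 x y
      linarith
    simpa using this
  · linarith
end

section
/- Let P₁ and P₂ be finite subsets of a metric space (X, d). Let μ₁ be a pseudo-ultrametric on P₁ and μ₂ a pseudo-ultrametric on P₂ such that L∞(μ₁, d restricted to P₁) ≤ χ and L∞(μ₂, d restricted to P₂) ≤ χ. Let C be a δ-local correspondence between P₁ and P₂. Then the distortion satisfies dis(μ₁, μ₂; C) ≤ 2χ + 2δ, i.e. for all (x,y), (x',y') ∈ C, |μ₁(x,x') − μ₂(y,y')| ≤ 2χ + 2δ. -/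
/-- Let `P₁`, `P₂` be finite subsets of a metric space `(X, d)`, let `μ₁`, `μ₂`
be pseudo-ultrametrics on `P₁`, `P₂` with `L∞(μ₁, d|_{P₁}) ≤ χ` and
`L∞(μ₂, d|_{P₂}) ≤ χ`, and let `C` be a `δ`-local correspondence between `P₁`
and `P₂`. Then the distortion satisfies `dis(μ₁, μ₂; C) ≤ 2χ + 2δ`, i.e.
`|μ₁(x,x') − μ₂(y,y')| ≤ 2χ + 2δ` for all `(x,y), (x',y') ∈ C`. -/
theorem distortion_le_two_chi_add_two_delta
    (X : Type*) [MetricSpace X] (P₁ P₂ : Set X)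
    (hP₁fin : P₁.Finite) (hP₂fin : P₂.Finite)
    (μ₁ μ₂ : X → X → ℝ) (χ δ : ℝ)
    -- `μ₁` is a pseudo-ultrametric on `P₁`
    (h₁self : ∀ x ∈ P₁, μ₁ x x = 0)
    (h₁symm : ∀ x ∈ P₁, ∀ x' ∈ P₁, μ₁ x x' = μ₁ x' x)
    (h₁nonneg : ∀ x ∈ P₁, ∀ x' ∈ P₁, 0 ≤ μ₁ x x')
    (h₁ultra : ∀ x ∈ P₁, ∀ y ∈ P₁, ∀ z ∈ P₁, μ₁ x z ≤ max (μ₁ x y) (μ₁ y z))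
    -- `μ₂` is a pseudo-ultrametric on `P₂`
    (h₂self : ∀ y ∈ P₂, μ₂ y y = 0)
    (h₂symm : ∀ y ∈ P₂, ∀ y' ∈ P₂, μ₂ y y' = μ₂ y' y)
    (h₂nonneg : ∀ y ∈ P₂, ∀ y' ∈ P₂, 0 ≤ μ₂ y y')
    (h₂ultra : ∀ x ∈ P₂, ∀ y ∈ P₂, ∀ z ∈ P₂, μ₂ x z ≤ max (μ₂ x y) (μ₂ y z))
    -- `L∞(μ₁, d|_{P₁}) ≤ χ` and `L∞(μ₂, d|_{P₂}) ≤ χ`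
    (h₁fit : ∀ x ∈ P₁, ∀ x' ∈ P₁, |μ₁ x x' - dist x x'| ≤ χ)
    (h₂fit : ∀ y ∈ P₂, ∀ y' ∈ P₂, |μ₂ y y' - dist y y'| ≤ χ)
    -- `C` is a `δ`-local correspondence between `P₁` and `P₂`
    (C : Set (X × X))
    (hCsub : C ⊆ P₁ ×ˢ P₂)
    (hCleft : ∀ x ∈ P₁, ∃ y ∈ P₂, (x, y) ∈ C)
    (hCright : ∀ y ∈ P₂, ∃ x ∈ P₁, (x, y) ∈ C)
    (hlocal : ∀ p ∈ C, dist p.1 p.2 ≤ δ) :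
    ∀ x y x' y' : X, (x, y) ∈ C → (x', y') ∈ C →
      |μ₁ x x' - μ₂ y y'| ≤ 2 * χ + 2 * δ := by
  intro x y x' y' hxy hxy'
  have hx := (hCsub hxy).1
  have hy := (hCsub hxy).2
  have hx' := (hCsub hxy').1
  have hy' := (hCsub hxy').2
  have h1 := abs_le.mp (h₁fit x hx x' hx')
  have h2 := abs_le.mp (h₂fit y hy y' hy')
  have hd1 := hlocal _ hxy
  have hd2 := hlocal _ hxy'
  simp only at hd1 hd2
  have t1 : dist x x' ≤ dist x y + dist y y' + dist y' x' := dist_triangle4 _ _ _ _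
  have t2 : dist y y' ≤ dist y x + dist x x' + dist x' y' := dist_triangle4 _ _ _ _
  rw [dist_comm y' x'] at t1
  rw [dist_comm y x] at t2
  rw [abs_le]
  constructor <;> linarith
end

section
/- Let P₁ and P₂ be finite subsets of a metric space (X, d). Let μ₁ be a pseudo-ultrametric on P₁ and μ₂ a pseudo-ultrametric on P₂ that are subdominant with one-sided error χ, i.e. 0 ≤ d(x,x') − μ₁(x,x') ≤ χ for all x,x' ∈ P₁ and 0 ≤ d(y,y') − μ₂(y,y') ≤ χ for all y,y' ∈ P₂. Let C be a δ-local correspondence between P₁ and P₂. Then dis(μ₁, μ₂; C) ≤ χ + 2δ. -/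
/-- Let `P₁`, `P₂` be finite subsets of a metric space `(X, d)`, let `μ₁`, `μ₂`
be pseudo-ultrametrics on `P₁`, `P₂` that are subdominant with one-sided error
`χ` (i.e. `0 ≤ d(x,x') − μᵢ(x,x') ≤ χ` on the respective sets), and let `C` be
a `δ`-local correspondence between `P₁` and `P₂`. Then
`dis(μ₁, μ₂; C) ≤ χ + 2δ`. -/
theorem distortion_le_chi_add_two_delta_of_subdominant
    (X : Type*) [MetricSpace X] (P₁ P₂ : Set X)
    (hP₁fin : P₁.Finite) (hP₂fin : P₂.Finite)
    (μ₁ μ₂ : X → X → ℝ) (χ δ : ℝ)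
    -- `μ₁` is a pseudo-ultrametric on `P₁`
    (h₁self : ∀ x ∈ P₁, μ₁ x x = 0)
    (h₁symm : ∀ x ∈ P₁, ∀ x' ∈ P₁, μ₁ x x' = μ₁ x' x)
    (h₁nonneg : ∀ x ∈ P₁, ∀ x' ∈ P₁, 0 ≤ μ₁ x x')
    (h₁ultra : ∀ x ∈ P₁, ∀ y ∈ P₁, ∀ z ∈ P₁, μ₁ x z ≤ max (μ₁ x y) (μ₁ y z))
    -- `μ₂` is a pseudo-ultrametric on `P₂`
    (h₂self : ∀ y ∈ P₂, μ₂ y y = 0)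
    (h₂symm : ∀ y ∈ P₂, ∀ y' ∈ P₂, μ₂ y y' = μ₂ y' y)
    (h₂nonneg : ∀ y ∈ P₂, ∀ y' ∈ P₂, 0 ≤ μ₂ y y')
    (h₂ultra : ∀ x ∈ P₂, ∀ y ∈ P₂, ∀ z ∈ P₂, μ₂ x z ≤ max (μ₂ x y) (μ₂ y z))
    -- one-sided error: `0 ≤ d − μᵢ ≤ χ` on the respective sets
    (h₁fit : ∀ x ∈ P₁, ∀ x' ∈ P₁,
      0 ≤ dist x x' - μ₁ x x' ∧ dist x x' - μ₁ x x' ≤ χ)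
    (h₂fit : ∀ y ∈ P₂, ∀ y' ∈ P₂,
      0 ≤ dist y y' - μ₂ y y' ∧ dist y y' - μ₂ y y' ≤ χ)
    -- `C` is a `δ`-local correspondence between `P₁` and `P₂`
    (C : Set (X × X))
    (hCsub : C ⊆ P₁ ×ˢ P₂)
    (hCleft : ∀ x ∈ P₁, ∃ y ∈ P₂, (x, y) ∈ C)
    (hCright : ∀ y ∈ P₂, ∃ x ∈ P₁, (x, y) ∈ C)
    (hlocal : ∀ p ∈ C, dist p.1 p.2 ≤ δ) :
    ∀ x y x' y' : X, (x, y) ∈ C → (x', y') ∈ C →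
      |μ₁ x x' - μ₂ y y'| ≤ χ + 2 * δ := by
  intro x y x' y' hxy hx'y'
  have hx := (hCsub hxy).1
  have hy := (hCsub hxy).2
  have hx' := (hCsub hx'y').1
  have hy' := (hCsub hx'y').2
  have hd1 := h₁fit x hx x' hx'
  have hd2 := h₂fit y hy y' hy'
  have hl1 := hlocal _ hxy
  have hl2 := hlocal _ hx'y'
  simp only at hl1 hl2
  have t1 : dist x x' ≤ dist x y + dist y y' + dist y' x' := dist_triangle4 x y y' x'
  have t2 : dist y y' ≤ dist y x + dist x x' + dist x' y' := dist_triangle4 y x x' y'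
  rw [abs_le]
  constructor
  · have := dist_comm y x ▸ t2
    have := dist_comm x' y' ▸ this
    linarith [hd1.1, hd1.2, hd2.1, hd2.2]
  · have := dist_comm y' x' ▸ t1
    linarith [hd1.1, hd1.2, hd2.1, hd2.2]
end

section
/- Let P₁, …, P_t be nonempty finite sets, let n = |P₁| + ⋯ + |P_t|, and for each i ∈ {1, …, t−1} let C_i be a correspondence between P_i and P_{i+1}. Then there exist k ≤ n threads τ₁, …, τ_k (each τ_j satisfying τ_j(i) ∈ P_i for all i and (τ_j(i), τ_j(i+1)) ∈ C_i for all i ∈ {1, …, t−1}) such that every point is covered: for every i ∈ {1, …, t} and every p ∈ P_i there exists j ∈ {1, …, k} with τ_j(i) = p. -/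
/-- Forward extension of a thread using a choice function `F`. -/
def threadFwd {α : Type*} (F : ℕ → α → α) (i : ℕ) (p : α) : ℕ → α
  | 0 => p
  | m + 1 => F (i + m) (threadFwd F i p m)

/-- Backward extension of a thread using a choice function `B`. -/
def threadBwd {α : Type*} (B : ℕ → α → α) (i : ℕ) (p : α) : ℕ → α
  | 0 => p
  | m + 1 => B (i - m - 1) (threadBwd B i p m)

/-- The thread through `p ∈ P i`. -/
def threadThru {α : Type*} (F B : ℕ → α → α) (i : ℕ) (p : α) (j : ℕ) : α :=
  if i ≤ j then threadFwd F i p (j - i) else threadBwd B i p (i - j)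

/-- Let `P 0, …, P (t-1)` be nonempty finite sets with
`n = |P 0| + ⋯ + |P (t-1)|`, and for each `i` with `i + 1 < t` let `C i` be a
correspondence between `P i` and `P (i+1)`. Then there exist `k ≤ n` threads
`τ 0, …, τ (k-1)` (each `τ j` satisfying `τ j i ∈ P i` for all `i < t` and
`(τ j i, τ j (i+1)) ∈ C i` for all `i` with `i + 1 < t`) covering every point:
for every `i < t` and every `p ∈ P i` there is `j` with `τ j i = p`. -/
theorem thread_cover_exists
    (α : Type*) (t : ℕ) (P : ℕ → Finset α)
    (hPne : ∀ i < t, (P i).Nonempty)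
    (C : ℕ → Set (α × α))
    (hCsub : ∀ i, i + 1 < t → C i ⊆ {q : α × α | q.1 ∈ P i ∧ q.2 ∈ P (i + 1)})
    (hCleft : ∀ i, i + 1 < t → ∀ u ∈ P i, ∃ v ∈ P (i + 1), (u, v) ∈ C i)
    (hCright : ∀ i, i + 1 < t → ∀ v ∈ P (i + 1), ∃ u ∈ P i, (u, v) ∈ C i) :
    ∃ k : ℕ, k ≤ ∑ i ∈ Finset.range t, (P i).card ∧
      ∃ τ : Fin k → ℕ → α,
        (∀ j : Fin k, ∀ i < t, τ j i ∈ P i) ∧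
        (∀ j : Fin k, ∀ i, i + 1 < t → (τ j i, τ j (i + 1)) ∈ C i) ∧
        (∀ i < t, ∀ p ∈ P i, ∃ j : Fin k, τ j i = p) := by
  classical
  -- choice functions: forward and backward steps
  set F : ℕ → α → α := fun i u =>
    if h : i + 1 < t ∧ u ∈ P i then (hCleft i h.1 u h.2).choose else u with hFdef
  set B : ℕ → α → α := fun i v =>
    if h : i + 1 < t ∧ v ∈ P (i + 1) then (hCright i h.1 v h.2).choose else v with hBdef
  have hF : ∀ i u, i + 1 < t → u ∈ P i → F i u ∈ P (i + 1) ∧ (u, F i u) ∈ C i := by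
    intro i u h hu
    have : F i u = (hCleft i h u hu).choose := by
      simp only [hFdef, dif_pos (And.intro h hu)]
    rw [this]
    exact (hCleft i h u hu).choose_spec
  have hB : ∀ i v, i + 1 < t → v ∈ P (i + 1) → B i v ∈ P i ∧ (B i v, v) ∈ C i := by
    intro i v h hv
    have : B i v = (hCright i h v hv).choose := by
      simp only [hBdef, dif_pos (And.intro h hv)]
    rw [this]
    exact (hCright i h v hv).choose_spec
  -- membership of the forward part
  have hg : ∀ i p, p ∈ P i → ∀ m, i + m < t → threadFwd F i p m ∈ P (i + m) := by
    intro i p hp m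
    induction m with
    | zero => intro _; simpa [threadFwd] using hp
    | succ m ih =>
      intro hm
      have hm' : i + m + 1 < t := by omega
      exact (hF (i + m) (threadFwd F i p m) hm' (ih (by omega))).1
  -- membership of the backward part
  have hb : ∀ i p, i < t → p ∈ P i → ∀ m, m ≤ i → threadBwd B i p m ∈ P (i - m) := by
    intro i p hi hp m
    induction m with
    | zero => intro _; simpa [threadBwd] using hp
    | succ m ih =>
      intro hm
      have hle : m ≤ i := by omega
      have hv : threadBwd B i p m ∈ P (i - m) := ih hle
      have harith : i - m - 1 + 1 = i - m := by omega
      have hlt : i - m - 1 + 1 < t := by omega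
      have := hB (i - m - 1) (threadBwd B i p m) hlt (by rw [harith]; exact hv)
      have hsub : i - (m + 1) = i - m - 1 := by omega
      rw [hsub]
      exact this.1
  -- membership of the thread
  have hθmem : ∀ i p, i < t → p ∈ P i → ∀ j < t, threadThru F B i p j ∈ P j := by
    intro i p hi hp j hj
    unfold threadThru
    by_cases h : i ≤ j
    · rw [if_pos h]
      have := hg i p hp (j - i) (by omega)
      have : threadFwd F i p (j - i) ∈ P (i + (j - i)) := this
      rwa [show i + (j - i) = j by omega] at this
    · rw [if_neg h]
      have := hb i p hi hp (i - j) (by omega)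
      rwa [show i - (i - j) = j by omega] at this
  -- edges of the thread
  have hθedge : ∀ i p, i < t → p ∈ P i → ∀ j, j + 1 < t →
      (threadThru F B i p j, threadThru F B i p (j + 1)) ∈ C j := by
    intro i p hi hp j hj
    by_cases h : i ≤ j
    · have h1 : threadThru F B i p j = threadFwd F i p (j - i) := by
        unfold threadThru; rw [if_pos h]
      have h2 : threadThru F B i p (j + 1) = F j (threadFwd F i p (j - i)) := by
        unfold threadThru
        rw [if_pos (by omega), show j + 1 - i = (j - i) + 1 by omega]
        show F (i + (j - i)) _ = _
        rw [show i + (j - i) = j by omega]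
      have hmem : threadFwd F i p (j - i) ∈ P j := by
        have := hg i p hp (j - i) (by omega)
        rwa [show i + (j - i) = j by omega] at this
      rw [h1, h2]
      exact (hF j _ hj hmem).2
    · -- j < i; both points on the backward part (note `threadBwd B i p 0 = p = threadFwd F i p 0`)
      have hji : j + 1 ≤ i := by omega
      have h2 : threadThru F B i p (j + 1) = threadBwd B i p (i - (j + 1)) := by
        unfold threadThru
        by_cases h' : i ≤ j + 1
        · rw [if_pos h', show j + 1 - i = 0 by omega, show i - (j + 1) = 0 by omega]
          rfl
        · rw [if_neg h']
      have hv : threadBwd B i p (i - (j + 1)) ∈ P (j + 1) := by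
        have := hb i p hi hp (i - (j + 1)) (by omega)
        rwa [show i - (i - (j + 1)) = j + 1 by omega] at this
      have h1 : threadThru F B i p j = B j (threadBwd B i p (i - (j + 1))) := by
        unfold threadThru
        rw [if_neg h, show i - j = (i - (j + 1)) + 1 by omega]
        show B (i - (i - (j + 1)) - 1) _ = _
        rw [show i - (i - (j + 1)) - 1 = j by omega]
      rw [h1, h2]
      exact (hB j _ hj hv).2
  -- the thread passes through `p` at position `i`
  have hθat : ∀ i p, threadThru F B i p i = p := by
    intro i p
    unfold threadThru
    rw [if_pos le_rfl, Nat.sub_self]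
    rfl
  -- index the threads by the points
  set S : Finset ((_ : ℕ) × α) := (Finset.range t).sigma (fun i => P i) with hSdef
  refine ⟨S.card, ?_, ?_⟩
  · rw [hSdef, Finset.card_sigma]
  · let e := S.equivFin
    refine ⟨fun j => threadThru F B (e.symm j).1.1 (e.symm j).1.2, ?_, ?_, ?_⟩
    · intro j i hi
      have hmem := Finset.mem_sigma.mp (e.symm j).2
      exact hθmem _ _ (Finset.mem_range.mp hmem.1) hmem.2 i hi
    · intro j i hi
      have hmem := Finset.mem_sigma.mp (e.symm j).2
      exact hθedge _ _ (Finset.mem_range.mp hmem.1) hmem.2 i hi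
    · intro i hi p hp
      have hmem : (⟨i, p⟩ : (_ : ℕ) × α) ∈ S :=
        Finset.mem_sigma.mpr ⟨Finset.mem_range.mpr hi, hp⟩
      refine ⟨e ⟨⟨i, p⟩, hmem⟩, ?_⟩
      show threadThru F B ((e.symm (e ⟨⟨i, p⟩, hmem⟩)) : (_ : ℕ) × α).1 ((e.symm (e ⟨⟨i, p⟩, hmem⟩)) : (_ : ℕ) × α).2 i = p
      rw [Equiv.symm_apply_apply]
      exact hθat i p
end

section
/- Let P₁ and P₂ be finite subsets of a metric space (X, d), and let L₁ and L₂ be k-labelings of P₁ and P₂ respectively that are δ-contiguous. Then the relation C = {(u, v) ∈ P₁ × P₂ : L₁(u) ∩ L₂(v) ≠ ∅} is a correspondence between P₁ and P₂, and C is δ-local. -/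
/-- Let `P₁`, `P₂` be finite subsets of a metric space `(X, d)` and let `L₁`,
`L₂` be `δ`-contiguous `k`-labelings of `P₁`, `P₂` (each `Lᵢ` assigns to points
of `Pᵢ` label sets forming a partition of the `k` labels, and every label of a
point is shared with some point of the other set at distance at most `δ`).
Then `C = {(u,v) ∈ P₁ × P₂ : L₁(u) ∩ L₂(v) ≠ ∅}` is a correspondence between
`P₁` and `P₂`, and `C` is `δ`-local. -/
theorem contiguous_labelings_give_local_correspondence
    (X : Type*) [MetricSpace X] (P₁ P₂ : Set X)
    (hP₁fin : P₁.Finite) (hP₂fin : P₂.Finite)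
    (k : ℕ) (L₁ L₂ : X → Set (Fin k)) (δ : ℝ)
    -- `L₁` is a `k`-labeling of `P₁`: `{L₁(p) : p ∈ P₁}` partitions `Fin k`
    (h₁cover : ∀ j : Fin k, ∃ u ∈ P₁, j ∈ L₁ u)
    (h₁disj : ∀ u ∈ P₁, ∀ u' ∈ P₁, u ≠ u' → L₁ u ∩ L₁ u' = ∅)
    (h₁ne : ∀ u ∈ P₁, (L₁ u).Nonempty)
    -- `L₂` is a `k`-labeling of `P₂`
    (h₂cover : ∀ j : Fin k, ∃ v ∈ P₂, j ∈ L₂ v)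
    (h₂disj : ∀ v ∈ P₂, ∀ v' ∈ P₂, v ≠ v' → L₂ v ∩ L₂ v' = ∅)
    (h₂ne : ∀ v ∈ P₂, (L₂ v).Nonempty)
    -- `L₁` and `L₂` are `δ`-contiguous
    (hcontig₁ : ∀ u ∈ P₁, ∀ j ∈ L₁ u, ∃ v ∈ P₂, dist u v ≤ δ ∧ j ∈ L₂ v)
    (hcontig₂ : ∀ v ∈ P₂, ∀ j ∈ L₂ v, ∃ u ∈ P₁, dist u v ≤ δ ∧ j ∈ L₁ u)
    (C : Set (X × X))
    (hC : C = {p : X × X | p.1 ∈ P₁ ∧ p.2 ∈ P₂ ∧ (L₁ p.1 ∩ L₂ p.2).Nonempty}) :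
    C ⊆ P₁ ×ˢ P₂ ∧
    (∀ u ∈ P₁, ∃ v ∈ P₂, (u, v) ∈ C) ∧
    (∀ v ∈ P₂, ∃ u ∈ P₁, (u, v) ∈ C) ∧
    (∀ p ∈ C, dist p.1 p.2 ≤ δ) := by
  subst hC
  refine ⟨?_, ?_, ?_, ?_⟩
  · rintro ⟨u, v⟩ ⟨hu, hv, _⟩; exact ⟨hu, hv⟩
  · intro u hu
    obtain ⟨j, hj⟩ := h₁ne u hu
    obtain ⟨v, hv, _, hjv⟩ := hcontig₁ u hu j hj
    exact ⟨v, hv, hu, hv, j, hj, hjv⟩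
  · intro v hv
    obtain ⟨j, hj⟩ := h₂ne v hv
    obtain ⟨u, hu, _, hju⟩ := hcontig₂ v hv j hj
    exact ⟨u, hu, hu, hv, j, hju, hj⟩
  · rintro ⟨u, v⟩ ⟨hu, hv, j, hj₁, hj₂⟩
    obtain ⟨v', hv', hd, hjv'⟩ := hcontig₁ u hu j hj₁
    rcases eq_or_ne v v' with rfl | hne
    · exact hd
    · exact absurd (h₂disj v hv v' hv' hne) fun h =>
        Set.notMem_empty j (h ▸ ⟨hj₂, hjv'⟩)
end

section
/- Let G = (V, E) be a finite simple graph that admits a proper 3-coloring using all three colors. Let P = {r, g, b} with metric d_P equal to 2 between distinct points, and let d_V be the metric on V given by d_V(u,v) = 2 if {u,v} ∈ E, d_V(u,v) = 1 if u ≠ v and {u,v} ∉ E, and d_V(u,u) = 0. Then there exist a pseudo-ultrametric μ_P on P with L∞(d_P, μ_P) ≤ 1, a pseudo-ultrametric μ_V on V with L∞(d_V, μ_V) ≤ 1, and a correspondence C between P and V with distortion dis(μ_P, μ_V; C) = 0. -/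
/-- If a finite simple graph `G = (V, E)` admits a proper 3-coloring using all
three colors, then for `P = {r,g,b}` with `d_P = 2` between distinct points,
and `d_V` on `V` given by `d_V(u,v) = 2` if `u ∼ v`, `1` if `u ≠ v` and
`u ≁ v`, `0` if `u = v`, there exist pseudo-ultrametrics `μ_P` on `P` with
`L∞(d_P, μ_P) ≤ 1` and `μ_V` on `V` with `L∞(d_V, μ_V) ≤ 1`, together with a
correspondence `C` between `P` and `V` of distortion `dis(μ_P, μ_V; C) = 0`. -/
theorem three_colorable_gives_cheap_clustering
    (V : Type*) [Fintype V] (G : SimpleGraph V)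
    (c : V → Fin 3)
    (hproper : ∀ u v : V, G.Adj u v → c u ≠ c v)
    (hall : Function.Surjective c)
    (dP : Fin 3 → Fin 3 → ℝ)
    (hdP : ∀ a b : Fin 3, dP a b = if a = b then 0 else 2)
    (dV : V → V → ℝ)
    (hdV_self : ∀ u : V, dV u u = 0)
    (hdV_adj : ∀ u v : V, G.Adj u v → dV u v = 2)
    (hdV_nonadj : ∀ u v : V, u ≠ v → ¬G.Adj u v → dV u v = 1) :
    ∃ (μP : Fin 3 → Fin 3 → ℝ) (μV : V → V → ℝ) (C : Set (Fin 3 × V)),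
      -- `μP` is a pseudo-ultrametric on `P`
      (∀ a : Fin 3, μP a a = 0) ∧
      (∀ a b : Fin 3, μP a b = μP b a) ∧
      (∀ a b : Fin 3, 0 ≤ μP a b) ∧
      (∀ a b e : Fin 3, μP a e ≤ max (μP a b) (μP b e)) ∧
      -- `L∞(dP, μP) ≤ 1`
      (∀ a b : Fin 3, |dP a b - μP a b| ≤ 1) ∧
      -- `μV` is a pseudo-ultrametric on `V`
      (∀ u : V, μV u u = 0) ∧
      (∀ u v : V, μV u v = μV v u) ∧
      (∀ u v : V, 0 ≤ μV u v) ∧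
      (∀ u v w : V, μV u w ≤ max (μV u v) (μV v w)) ∧
      -- `L∞(dV, μV) ≤ 1`
      (∀ u v : V, |dV u v - μV u v| ≤ 1) ∧
      -- `C` is a correspondence between `P` and `V`
      (∀ a : Fin 3, ∃ v : V, (a, v) ∈ C) ∧
      (∀ v : V, ∃ a : Fin 3, (a, v) ∈ C) ∧
      -- `dis(μP, μV; C) = 0`
      (∀ (a : Fin 3) (u : V) (b : Fin 3) (v : V),
        (a, u) ∈ C → (b, v) ∈ C → μP a b = μV u v) := by
  refine ⟨fun a b => if a = b then 0 else 1,
    fun u v => if c u = c v then 0 else 1,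
    {p | c p.2 = p.1}, ?_, ?_, ?_, ?_, ?_, ?_, ?_, ?_, ?_, ?_, ?_, ?_, ?_⟩
  · intro a; simp
  · intro a b; by_cases h : a = b <;> simp [h, eq_comm]
  · intro a b; dsimp only; split <;> norm_num
  · intro a b e
    by_cases h1 : a = b <;> by_cases h2 : b = e <;>
      simp [h1, h2] <;> split <;> norm_num
  · intro a b; rw [hdP]; by_cases h : a = b <;> simp [h] <;> norm_num
  · intro u; simp
  · intro u v; by_cases h : c u = c v <;> simp [h, eq_comm]
  · intro u v; dsimp only; split <;> norm_num
  · intro u v w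
    by_cases h1 : c u = c v <;> by_cases h2 : c v = c w <;>
      simp [h1, h2] <;> split <;> norm_num
  · intro u v
    by_cases h : u = v
    · simp [h, hdV_self]
    · by_cases ha : G.Adj u v
      · rw [hdV_adj u v ha]; simp [hproper u v ha]; norm_num
      · rw [hdV_nonadj u v h ha]; dsimp only; split <;> norm_num
  · intro a; obtain ⟨v, hv⟩ := hall a; exact ⟨v, hv⟩
  · intro v; exact ⟨c v, rfl⟩
  · intro a u b v ha hb
    simp only [Set.mem_setOf_eq] at ha hb
    subst ha; subst hb; rfl
end

section
/- Let G = (V, E) be a finite simple graph. Let P = {r, g, b} with metric d_P equal to 2 between distinct points, and let d_V be the metric on V given by d_V(u,v) = 2 if {u,v} ∈ E, d_V(u,v) = 1 if u ≠ v and {u,v} ∉ E, and d_V(u,u) = 0. Suppose there exist a pseudo-ultrametric μ_P on P with L∞(d_P, μ_P) < 2, a pseudo-ultrametric μ_V on V with L∞(d_V, μ_V) < 2, and a correspondence C between P and V with distortion dis(μ_P, μ_V; C) = 0. Then G admits a proper 3-coloring. -/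
/-- Let `G = (V, E)` be a finite simple graph, `P = {r,g,b}` with `d_P = 2`
between distinct points, and `d_V` on `V` given by `d_V(u,v) = 2` if `u ∼ v`,
`1` if `u ≠ v` and `u ≁ v`, `0` if `u = v`. If there are pseudo-ultrametrics
`μ_P` on `P` with `L∞(d_P, μ_P) < 2` and `μ_V` on `V` with `L∞(d_V, μ_V) < 2`,
together with a correspondence `C` between `P` and `V` of distortion
`dis(μ_P, μ_V; C) = 0`, then `G` admits a proper 3-coloring. -/
theorem cheap_clustering_gives_three_coloring
    (V : Type*) [Fintype V] (G : SimpleGraph V)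
    (dP : Fin 3 → Fin 3 → ℝ)
    (hdP : ∀ a b : Fin 3, dP a b = if a = b then 0 else 2)
    (dV : V → V → ℝ)
    (hdV_self : ∀ u : V, dV u u = 0)
    (hdV_adj : ∀ u v : V, G.Adj u v → dV u v = 2)
    (hdV_nonadj : ∀ u v : V, u ≠ v → ¬G.Adj u v → dV u v = 1)
    (μP : Fin 3 → Fin 3 → ℝ) (μV : V → V → ℝ) (C : Set (Fin 3 × V))
    -- `μP` is a pseudo-ultrametric on `P`
    (hμP_self : ∀ a : Fin 3, μP a a = 0)
    (hμP_symm : ∀ a b : Fin 3, μP a b = μP b a)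
    (hμP_nonneg : ∀ a b : Fin 3, 0 ≤ μP a b)
    (hμP_ultra : ∀ a b e : Fin 3, μP a e ≤ max (μP a b) (μP b e))
    -- `L∞(dP, μP) < 2`
    (hμP_fit : ∀ a b : Fin 3, |dP a b - μP a b| < 2)
    -- `μV` is a pseudo-ultrametric on `V`
    (hμV_self : ∀ u : V, μV u u = 0)
    (hμV_symm : ∀ u v : V, μV u v = μV v u)
    (hμV_nonneg : ∀ u v : V, 0 ≤ μV u v)
    (hμV_ultra : ∀ u v w : V, μV u w ≤ max (μV u v) (μV v w))
    -- `L∞(dV, μV) < 2`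
    (hμV_fit : ∀ u v : V, |dV u v - μV u v| < 2)
    -- `C` is a correspondence between `P` and `V`
    (hCleft : ∀ a : Fin 3, ∃ v : V, (a, v) ∈ C)
    (hCright : ∀ v : V, ∃ a : Fin 3, (a, v) ∈ C)
    -- `dis(μP, μV; C) = 0`
    (hdis : ∀ (a : Fin 3) (u : V) (b : Fin 3) (v : V),
      (a, u) ∈ C → (b, v) ∈ C → μP a b = μV u v) :
    ∃ c : V → Fin 3, ∀ u v : V, G.Adj u v → c u ≠ c v := by
  choose c hc using hCright
  refine ⟨c, fun u v hadj hcc => ?_⟩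
  have h1 := hdis (c u) u (c v) v (hc u) (hc v)
  rw [hcc, hμP_self] at h1
  have h2 := hμV_fit u v
  rw [hdV_adj u v hadj, ← h1] at h2
  norm_num at h2
end
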